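/- Let X be a connected graph, ξ: D → A a harmonic flow into an abelian group A, and f a ξ-invariant automorphism of X of finite order acting semiregularly on darts and vertices. Then the induced flow ξ̄ on the quotient graph Y = X/⟨f⟩, defined by ξ̄([x]) = ξ(x), satisfies the vertex Kirchhoff law, and its local group A^ξ̄ (generated by sums of ξ̄ along oriented cycles of Y) is an epimorphic image of the cyclic group ⟨f⟩. -/

import Mathlib

/-- A multigraph in the dart model: a finite nonempty set of darts, an involution
reversing darts, and an incidence map assigning to each dart its initial vertex.
Semiedges (fixed darts), loops and parallel edges are allowed. -/
structure Multigraph where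
  D : Type
  V : Type
  instFintypeD : Fintype D
  instDecEqD : DecidableEq D
  instNonemptyD : Nonempty D
  instFintypeV : Fintype V
  instDecEqV : DecidableEq V
  inv : D → D
  inv_inv : ∀ x, inv (inv x) = x
  vtx : D → V
  vtx_surj : Function.Surjective vtx

attribute [instance] Multigraph.instFintypeD Multigraph.instDecEqD
  Multigraph.instNonemptyD Multigraph.instFintypeV Multigraph.instDecEqV

namespace Multigraph

variable (X : Multigraph)

/-- The darts emanating from a vertex. -/
def dartsAt (v : X.V) : Finset X.D := Finset.univ.filter (fun x => X.vtx x = v)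

/-- One step along a dart belonging to the set `P` of allowed darts. -/
def step (P : Set X.D) (u v : X.V) : Prop :=
  ∃ x, x ∈ P ∧ X.vtx x = u ∧ X.vtx (X.inv x) = v

/-- Any two vertices are joined by a walk using only darts from `P`. -/
def PreconnectedOn (P : Set X.D) : Prop :=
  ∀ u v : X.V, Relation.ReflTransGen (X.step P) u v

/-- A multigraph is connected if any two vertices are joined by a walk. -/
def Connected : Prop := X.PreconnectedOn Set.univ

/-- Number of edges in an inv-closed set of darts (semiedges count once). -/
def edgeCount (S : Finset X.D) : ℕ :=
  (S.card + (S.filter (fun x => X.inv x = x)).card) / 2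

/-- A spanning tree: an inv-closed set of darts which connects all vertices and
has exactly `|V| - 1` edges. -/
def IsSpanningTree (S : Finset X.D) : Prop :=
  (∀ x ∈ S, X.inv x ∈ S) ∧ X.PreconnectedOn ↑S ∧
    X.edgeCount S = Fintype.card X.V - 1

/-- The number of spanning trees. -/
noncomputable def tau : ℕ := Nat.card {S : Finset X.D // X.IsSpanningTree S}

/-- A simple graph: no loops, no semiedges, no parallel edges. -/
def Simple : Prop :=
  (∀ x, X.vtx x ≠ X.vtx (X.inv x)) ∧
  (∀ x y, X.vtx x = X.vtx y → X.vtx (X.inv x) = X.vtx (X.inv y) → x = y)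

/-- `X` is at least `k`-edge-connected: removing fewer than `k` edges
leaves it connected. -/
def EdgeConnectedGE (k : ℕ) : Prop :=
  ∀ S : Finset X.D, (∀ x ∈ S, X.inv x ∈ S) → X.edgeCount S < k →
    X.PreconnectedOn (↑S)ᶜ

/-- The automorphism group of a multigraph, as a subgroup of the permutations
of the darts: permutations commuting with the dart-reversing involution and
preserving the partition of darts into vertices. -/
def autGroup : Subgroup (Equiv.Perm X.D) where
  carrier := {f | (∀ x, f (X.inv x) = X.inv (f x)) ∧
    ∀ x y, X.vtx x = X.vtx y ↔ X.vtx (f x) = X.vtx (f y)}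
  one_mem' := ⟨fun _ => rfl, fun _ _ => Iff.rfl⟩
  mul_mem' := by
    rintro f g ⟨hf1, hf2⟩ ⟨hg1, hg2⟩
    refine ⟨fun x => ?_, fun x y => ?_⟩
    · simp [Equiv.Perm.mul_apply, hg1, hf1]
    · simp only [Equiv.Perm.mul_apply]
      exact (hg2 x y).trans (hf2 (g x) (g y))
  inv_mem' := by
    rintro f ⟨hf1, hf2⟩
    have hai : ∀ y : X.D, f (f⁻¹ y) = y := fun y => Equiv.apply_symm_apply f y
    refine ⟨fun x => f.injective ?_, fun x y => ?_⟩
    · rw [hai, hf1, hai]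
    · have := hf2 (f⁻¹ x) (f⁻¹ y)
      simpa [hai] using this.symm

end Multigraph

/-- A covering of multigraphs: a surjective graph homomorphism restricting to a
bijection on the darts at each vertex. -/
structure Covering (X Y : Multigraph) where
  toFun : X.D → Y.D
  surj : Function.Surjective toFun
  map_inv : ∀ x, toFun (X.inv x) = Y.inv (toFun x)
  map_vtx : ∀ x y, X.vtx x = X.vtx y → Y.vtx (toFun x) = Y.vtx (toFun y)
  loc_inj : ∀ x y, X.vtx x = X.vtx y → toFun x = toFun y → x = y
  loc_surj : ∀ x z, Y.vtx z = Y.vtx (toFun x) →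
    ∃ y, X.vtx y = X.vtx x ∧ toFun y = z

namespace Covering

variable {X Y : Multigraph} (ψ : Covering X Y)

/-- The covering is `n`-fold: every fibre has cardinality `n`. -/
def IsNFold (n : ℕ) : Prop := ∀ z : Y.D, Nat.card {x : X.D // ψ.toFun x = z} = n

/-- The group of covering transformations: automorphisms `f` of `X`
with `ψ ∘ f = ψ`. -/
def CT : Subgroup (Equiv.Perm X.D) where
  carrier := {f | f ∈ X.autGroup ∧ ∀ x, ψ.toFun (f x) = ψ.toFun x}
  one_mem' := ⟨X.autGroup.one_mem, fun _ => rfl⟩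
  mul_mem' := by
    rintro f g ⟨hf1, hf2⟩ ⟨hg1, hg2⟩
    exact ⟨X.autGroup.mul_mem hf1 hg1, fun x => by
      simp [Equiv.Perm.mul_apply, hf2, hg2]⟩
  inv_mem' := by
    rintro f ⟨hf1, hf2⟩
    refine ⟨X.autGroup.inv_mem hf1, fun x => ?_⟩
    have hai : f (f⁻¹ x) = x := Equiv.apply_symm_apply f x
    conv_rhs => rw [← hai]
    rw [hf2]

/-- The covering is regular: the covering transformations act transitively
(hence regularly) on every fibre. -/
def IsRegular : Prop :=
  ∀ x y, ψ.toFun x = ψ.toFun y → ∃ f ∈ ψ.CT, f x = y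

end Covering
namespace Multigraph

variable (X : Multigraph)

/-- The family `c : Fin n → X.D` of darts is an oriented (simple) cycle:
consecutive darts are incident (cyclically) and the visited vertices are
pairwise distinct. A single semiedge or loop is a cycle. -/
def IsCycleVec {n : ℕ} (hn : 0 < n) (c : Fin n → X.D) : Prop :=
  (∀ i : Fin n,
    X.vtx (X.inv (c i)) = X.vtx (c ⟨(i.1 + 1) % n, Nat.mod_lt _ hn⟩)) ∧
  Function.Injective fun i => X.vtx (c i)

/-- The defining relations of the Jacobian inside the free abelian group on
the darts: antisymmetry relations, vertex (Kirchhoff) relations and cycle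
(Kirchhoff) relations. -/
def jacRels : Set (FreeAbelianGroup X.D) :=
  {a | ∃ x, a = FreeAbelianGroup.of x + FreeAbelianGroup.of (X.inv x)} ∪
  {a | ∃ v, a = ∑ x ∈ X.dartsAt v, FreeAbelianGroup.of x} ∪
  {a | ∃ (n : ℕ) (hn : 0 < n) (c : Fin n → X.D), X.IsCycleVec hn c ∧
    a = ∑ i, FreeAbelianGroup.of (c i)}

/-- The Jacobian of a graph: the universal abelian group admitting a harmonic
flow on `X`, presented as the free abelian group on the darts modulo the
antisymmetry, vertex and cycle relations. -/
def jac : Type := FreeAbelianGroup X.D ⧸ AddSubgroup.closure X.jacRels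

instance : AddCommGroup X.jac :=
  QuotientAddGroup.Quotient.addCommGroup (AddSubgroup.closure X.jacRels)

/-- The canonical harmonic `J`-flow `D(X) → Jac(X)`. -/
def jflow (x : X.D) : X.jac := QuotientAddGroup.mk (FreeAbelianGroup.of x)

/-- A harmonic `A`-flow on `X`: an antisymmetric function on darts whose values
generate `A` and which satisfies both Kirchhoff laws. -/
structure IsHarmonicFlow {A : Type} [AddCommGroup A] (ν : X.D → A) : Prop where
  antisym : ∀ x, ν (X.inv x) = - ν x
  gen : AddSubgroup.closure (Set.range ν) = ⊤
  klv : ∀ v, ∑ x ∈ X.dartsAt v, ν x = 0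
  klc : ∀ {n : ℕ} (hn : 0 < n) (c : Fin n → X.D), X.IsCycleVec hn c →
    ∑ i, ν (c i) = 0

end Multigraph
namespace Multigraph

variable (X : Multigraph)

/-- The orbit equivalence on darts under the cyclic group generated by the
automorphism `f`. -/
def dartOrbitSetoid (f : X.autGroup) : Setoid X.D where
  r x y := ∃ k : ℤ, ((f : Equiv.Perm X.D) ^ k) x = y
  iseqv := by
    constructor
    · exact fun x => ⟨0, rfl⟩
    · rintro x y ⟨k, rfl⟩
      exact ⟨-k, by simp [← Equiv.Perm.mul_apply, ← zpow_add]⟩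
    · rintro x y z ⟨k, rfl⟩ ⟨m, rfl⟩
      exact ⟨m + k, by rw [zpow_add, Equiv.Perm.mul_apply]⟩

/-- The orbit equivalence on vertices under the cyclic group generated by the
automorphism `f`. -/
def vtxOrbitSetoid (f : X.autGroup) : Setoid X.V where
  r u v := ∃ (k : ℤ) (x : X.D),
    X.vtx x = u ∧ X.vtx (((f : Equiv.Perm X.D) ^ k) x) = v
  iseqv := by
    constructor
    · intro u
      obtain ⟨x, hx⟩ := X.vtx_surj u
      exact ⟨0, x, hx, by simpa using hx⟩
    · rintro u v ⟨k, x, hx, rfl⟩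
      refine ⟨-k, ((f : Equiv.Perm X.D) ^ k) x, rfl, ?_⟩
      rw [← Equiv.Perm.mul_apply, ← zpow_add, neg_add_cancel, zpow_zero,
        Equiv.Perm.one_apply, hx]
    · rintro u v w ⟨k, x, hx, hkx⟩ ⟨m, y, hy, rfl⟩
      refine ⟨m + k, x, hx, ?_⟩
      have hmem := (f ^ m).2
      have hcoe : ((f : Equiv.Perm X.D) ^ m) = ((f ^ m : X.autGroup) : Equiv.Perm X.D) := by
        simp
      rw [zpow_add, Equiv.Perm.mul_apply, hcoe]
      rw [hcoe] at *
      exact ((hmem.2 _ _).mp (hkx.trans hy.symm))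

/-- The quotient of `X` by the cyclic group of automorphisms generated by `f`:
darts and vertices are the orbits of `⟨f⟩`. -/
noncomputable def quotientGraph (f : X.autGroup) : Multigraph where
  D := Quotient (X.dartOrbitSetoid f)
  V := Quotient (X.vtxOrbitSetoid f)
  instFintypeD := @Quotient.fintype _ _ _ (fun _ _ => Classical.dec _)
  instDecEqD := Classical.decEq _
  instNonemptyD := ⟨Quotient.mk _ (Classical.arbitrary X.D)⟩
  instFintypeV := @Quotient.fintype _ _ _ (fun _ _ => Classical.dec _)
  instDecEqV := Classical.decEq _
  inv := Quotient.map X.inv (by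
    rintro x y ⟨k, rfl⟩
    refine ⟨k, ?_⟩
    have hcoe : ((f : Equiv.Perm X.D) ^ k) = ((f ^ k : X.autGroup) : Equiv.Perm X.D) := by
      simp
    rw [hcoe]
    exact ((f ^ k).2.1 x).symm ▸ rfl)
  inv_inv := by
    intro q
    induction q using Quotient.inductionOn with
    | h x => simp [Quotient.map_mk, X.inv_inv]
  vtx := Quotient.map X.vtx (by
    rintro x y ⟨k, rfl⟩
    exact ⟨k, x, rfl, rfl⟩)
  vtx_surj := by
    intro q
    induction q using Quotient.inductionOn with
    | h v =>
      obtain ⟨x, hx⟩ := X.vtx_surj v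
      exact ⟨Quotient.mk _ x, by simp [Quotient.map_mk, hx]⟩

end Multigraph

section WalkAux

lemma finval_add_one {n : ℕ} [NeZero n] (i : Fin n) : ((i + 1 : Fin n) : ℕ) = (i.1 + 1) % n := by
  rw [Fin.add_def, Fin.val_one']
  conv_rhs => rw [Nat.add_mod, Nat.mod_eq_of_lt i.isLt]

lemma fin_mk_mod_succ {n : ℕ} [NeZero n] (i : Fin n) :
    (⟨(i.1 + 1) % n, Nat.mod_lt _ i.pos⟩ : Fin n) = i + 1 :=
  Fin.ext (finval_add_one i).symm

lemma list_sum_fin {α : Type} {A : Type} [AddCommGroup A] (l : List α) (f : α → A) :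
    (l.map f).sum = ∑ i : Fin l.length, f (l.get i) := by
  conv_lhs => rw [← List.ofFn_get l]
  rw [List.map_ofFn, List.sum_ofFn]
  rfl

namespace Multigraph

/-- Walks in a multigraph, with endpoints. -/
inductive Walk (G : Multigraph) : G.V → G.V → Type
  | nil (u : G.V) : Walk G u u
  | cons {u v w : G.V} (x : G.D) (h1 : G.vtx x = u) (h2 : G.vtx (G.inv x) = v)
      (p : Walk G v w) : Walk G u w

namespace Walk

variable {G : Multigraph}

def darts : ∀ {u v : G.V}, Walk G u v → List G.D
  | _, _, .nil _ => []
  | _, _, .cons x _ _ p => x :: p.darts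

def append : ∀ {u v w : G.V}, Walk G u v → Walk G v w → Walk G u w
  | _, _, _, .nil _, q => q
  | _, _, _, .cons x h1 h2 p, q => .cons x h1 h2 (p.append q)

def reverse : ∀ {u v : G.V}, Walk G u v → Walk G v u
  | _, _, .nil u => .nil u
  | _, _, .cons x h1 h2 p =>
      p.reverse.append (.cons (G.inv x) h2 (by rw [G.inv_inv]; exact h1) (.nil _))

variable {A : Type} [AddCommGroup A]

def wsum (ν : G.D → A) {u v : G.V} (p : Walk G u v) : A := (p.darts.map ν).sum

@[simp] lemma wsum_nil (ν : G.D → A) (u : G.V) : wsum ν (.nil u : Walk G u u) = 0 := rfl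

@[simp] lemma wsum_cons (ν : G.D → A) {u v w : G.V} (x : G.D) (h1 : G.vtx x = u)
    (h2 : G.vtx (G.inv x) = v) (p : Walk G v w) :
    wsum ν (.cons x h1 h2 p) = ν x + wsum ν p := by
  simp [wsum, darts]

@[simp] lemma wsum_append (ν : G.D → A) {u v w : G.V} (p : Walk G u v) (q : Walk G v w) :
    wsum ν (p.append q) = wsum ν p + wsum ν q := by
  induction p with
  | nil => simp [append]
  | cons x h1 h2 p ih => simp [append, ih, add_assoc]

lemma wsum_reverse (ν : G.D → A) (hν : ∀ x, ν (G.inv x) = - ν x) {u v : G.V}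
    (p : Walk G u v) : wsum ν p.reverse = - wsum ν p := by
  induction p with
  | nil => simp [reverse]
  | cons x h1 h2 p ih => simp [reverse, ih, hν, add_comm]

lemma darts_eq_nil {u v : G.V} (p : Walk G u v) (h : p.darts = []) : u = v := by
  cases p with
  | nil => rfl
  | cons x h1 h2 p => simp [darts] at h

lemma darts_head {u v : G.V} (p : Walk G u v) : ∀ x ∈ p.darts.head?, G.vtx x = u := by
  cases p with
  | nil => simp [darts]
  | cons x h1 h2 p => simpa [darts] using h1

lemma darts_chain {u v : G.V} (p : Walk G u v) :
    p.darts.Chain' (fun x y => G.vtx (G.inv x) = G.vtx y) := by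
  induction p with
  | nil => exact List.isChain_nil
  | cons x h1 h2 p ih =>
      refine List.isChain_cons.mpr ⟨?_, ih⟩
      intro y hy
      rw [h2, (darts_head p y hy).symm]

lemma darts_last {u v : G.V} (p : Walk G u v) :
    ∀ x ∈ p.darts.getLast?, G.vtx (G.inv x) = v := by
  induction p with
  | nil => simp [darts]
  | cons x h1 h2 p ih =>
      cases hl : p.darts with
      | nil =>
          have hvw := darts_eq_nil p hl
          simp [darts, hl, ← hvw, h2]
      | cons a t =>
          intro y hy
          apply ih
          rw [hl]
          rwa [darts, hl, List.getLast?_cons_cons] at hy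

/-- Change the endpoints of a walk along equalities. -/
def copy {u v u' v' : G.V} (p : Walk G u v) (hu : u = u') (hv : v = v') : Walk G u' v' :=
  hu ▸ hv ▸ p

@[simp] lemma wsum_copy (ν : G.D → A) {u v u' v' : G.V} (p : Walk G u v)
    (hu : u = u') (hv : v = v') : wsum ν (p.copy hu hv) = wsum ν p := by
  subst hu; subst hv; rfl

/-- Map a walk along a graph homomorphism-like pair of maps. -/
def mapHom {G' : Multigraph} (fD : G.D → G'.D) (fV : G.V → G'.V)
    (hv : ∀ x, G'.vtx (fD x) = fV (G.vtx x))
    (hi : ∀ x, G'.vtx (G'.inv (fD x)) = fV (G.vtx (G.inv x))) :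
    ∀ {u v : G.V}, Walk G u v → Walk G' (fV u) (fV v)
  | _, _, .nil u => .nil (fV u)
  | _, _, .cons x h1 h2 p =>
      .cons (fD x) (by rw [hv, h1]) (by rw [hi, h2]) (mapHom fD fV hv hi p)

lemma darts_mapHom {G' : Multigraph} (fD : G.D → G'.D) (fV : G.V → G'.V)
    (hv : ∀ x, G'.vtx (fD x) = fV (G.vtx x))
    (hi : ∀ x, G'.vtx (G'.inv (fD x)) = fV (G.vtx (G.inv x)))
    {u v : G.V} (p : Walk G u v) :
    (p.mapHom fD fV hv hi).darts = p.darts.map fD := by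
  induction p with
  | nil => simp [mapHom, darts]
  | cons x h1 h2 p ih => simp [mapHom, darts, ih]

lemma wsum_mapHom {G' : Multigraph} (fD : G.D → G'.D) (fV : G.V → G'.V)
    (hv : ∀ x, G'.vtx (fD x) = fV (G.vtx x))
    (hi : ∀ x, G'.vtx (G'.inv (fD x)) = fV (G.vtx (G.inv x)))
    (ν : G.D → A) (ν' : G'.D → A) (hν : ∀ x, ν' (fD x) = ν x)
    {u v : G.V} (p : Walk G u v) :
    wsum ν' (p.mapHom fD fV hv hi) = wsum ν p := by
  unfold wsum
  rw [darts_mapHom, List.map_map]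
  have h : ν' ∘ fD = ν := funext hν
  rw [h]

end Walk

/-- The set of cycle sums of a flow. -/
def cycSums (G : Multigraph) {A : Type} [AddCommGroup A] (ν : G.D → A) : Set A :=
  {a | ∃ (n : ℕ) (hn : 0 < n) (c : Fin n → G.D),
    G.IsCycleVec hn c ∧ a = ∑ i, ν (c i)}

end Multigraph

end WalkAux

section ClosedWalk
namespace Multigraph

variable {G : Multigraph} {A : Type} [AddCommGroup A]

lemma closedwalk_sum_mem (ν : G.D → A) :
    ∀ (n : ℕ) (hn : 0 < n) (c : Fin n → G.D),
      (∀ i : Fin n, G.vtx (G.inv (c i)) = G.vtx (c ⟨(i.1 + 1) % n, Nat.mod_lt _ hn⟩)) →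
      ∑ i, ν (c i) ∈ AddSubgroup.closure (G.cycSums ν) := by
  intro n
  induction n using Nat.strong_induction_on with
  | _ n ih =>
    intro hn c hc
    haveI : NeZero n := ⟨hn.ne'⟩
    have hc' : ∀ i : Fin n, G.vtx (G.inv (c i)) = G.vtx (c (i + 1)) := by
      intro i
      rw [← fin_mk_mod_succ i]
      exact hc i
    by_cases hinj : Function.Injective (fun i : Fin n => G.vtx (c i))
    · exact AddSubgroup.subset_closure ⟨n, hn, c, ⟨hc, hinj⟩, rfl⟩
    · obtain ⟨i, j, hij, hne⟩ := Function.not_injective_iff.mp hinj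
      set c' : Fin n → G.D := fun t => c (t + i) with hc'def
      have hcc : ∀ t : Fin n, G.vtx (G.inv (c' t)) = G.vtx (c' (t + 1)) := by
        intro t
        have h := hc' (t + i)
        simpa [hc'def, add_right_comm] using h
      have hsum0 : ∑ t, ν (c' t) = ∑ t, ν (c t) := by
        simpa [hc'def] using Equiv.sum_comp (Equiv.addRight i) (fun t => ν (c t))
      set m : Fin n := j - i with hmdef
      have hm0 : m ≠ 0 := sub_ne_zero.mpr hne.symm
      have h0 : G.vtx (c' 0) = G.vtx (c' m) := by
        simp only [hc'def, hmdef, zero_add, sub_add_cancel]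
        exact hij
      have hk0 : 0 < m.1 := Nat.pos_of_ne_zero (fun h => hm0 (Fin.ext (by simp [h])))
      set k : ℕ := m.1 with hkdef
      have hkn : k < n := m.isLt
      set c₁ : Fin k → G.D := fun t => c' ⟨t.1, t.2.trans hkn⟩ with hc1
      set c₂ : Fin (n - k) → G.D := fun t => c' ⟨k + t.1, by omega⟩ with hc2
      have he : k + (n - k) = n := by omega
      -- a key computation rule
      have key1 : ∀ (a b : ℕ) (ha : a < n) (hb : b < n), b = (a + 1) % n →
          G.vtx (G.inv (c' ⟨a, ha⟩)) = G.vtx (c' ⟨b, hb⟩) := by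
        intro a b ha hb hb2
        rw [hcc ⟨a, ha⟩]
        congr 2
        apply Fin.ext
        rw [finval_add_one]
        exact hb2.symm
      have hm_eq : (⟨k, hkn⟩ : Fin n) = m := Fin.ext rfl
      have h0' : G.vtx (c' ⟨0, hn⟩) = G.vtx (c' ⟨k, hkn⟩) := by
        rw [hm_eq]
        rw [show (⟨0, hn⟩ : Fin n) = 0 from Fin.ext rfl]
        exact h0
      have hsplit : ∑ t : Fin n, ν (c' t)
          = ∑ t : Fin k, ν (c₁ t) + ∑ t : Fin (n - k), ν (c₂ t) := by
        rw [← Equiv.sum_comp (finCongr he) (fun t => ν (c' t)), Fin.sum_univ_add]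
        congr 1
      have hcl1 : ∀ t : Fin k, G.vtx (G.inv (c₁ t))
          = G.vtx (c₁ ⟨(t.1 + 1) % k, Nat.mod_lt _ hk0⟩) := by
        intro t
        show G.vtx (G.inv (c' ⟨t.1, _⟩)) = G.vtx (c' ⟨(t.1 + 1) % k, _⟩)
        by_cases h : t.1 + 1 < k
        · exact key1 _ _ _ _ (by rw [Nat.mod_eq_of_lt h, Nat.mod_eq_of_lt (by omega)])
        · have hk : t.1 + 1 = k := by omega
          have hmod : (t.1 + 1) % k = 0 := by rw [hk, Nat.mod_self]
          have : G.vtx (G.inv (c' ⟨t.1, t.2.trans hkn⟩)) = G.vtx (c' ⟨k, hkn⟩) :=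
            key1 _ _ _ _ (by rw [hk, ← hk, Nat.mod_eq_of_lt (by omega), hk])
          rw [this, ← h0']
          congr 2
          exact Fin.ext (by simp [hmod])
      have hcl2 : ∀ t : Fin (n - k), G.vtx (G.inv (c₂ t))
          = G.vtx (c₂ ⟨(t.1 + 1) % (n - k), Nat.mod_lt _ (by omega)⟩) := by
        intro t
        show G.vtx (G.inv (c' ⟨k + t.1, _⟩)) = G.vtx (c' ⟨k + (t.1 + 1) % (n - k), _⟩)
        by_cases h : t.1 + 1 < n - k
        · exact key1 _ _ _ _ (by
            rw [Nat.mod_eq_of_lt h, Nat.mod_eq_of_lt (by omega)]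
            omega)
        · have hk : t.1 + 1 = n - k := by omega
          have hmod : (t.1 + 1) % (n - k) = 0 := by rw [hk, Nat.mod_self]
          have h1 : G.vtx (G.inv (c' ⟨k + t.1, by omega⟩)) = G.vtx (c' ⟨0, hn⟩) :=
            key1 _ _ _ _ (by
              have : k + t.1 + 1 = n := by omega
              rw [this, Nat.mod_self])
          rw [h1, h0']
          congr 2
          exact Fin.ext (by simp [hmod])
      have h1 := ih k hkn hk0 c₁ hcl1
      have h2 := ih (n - k) (by omega) (by omega) c₂ hcl2
      rw [← hsum0, hsplit]
      exact AddSubgroup.add_mem _ h1 h2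

end Multigraph
end ClosedWalk

section Bridge
namespace Multigraph

variable {G : Multigraph} {A : Type} [AddCommGroup A]

lemma closed_wsum_mem (ν : G.D → A) {w : G.V} (q : Walk G w w) :
    q.wsum ν ∈ AddSubgroup.closure (G.cycSums ν) := by
  by_cases hl : q.darts = []
  · have h0 : q.wsum ν = 0 := by unfold Walk.wsum; rw [hl]; rfl
    rw [h0]; exact zero_mem _
  · have hn : 0 < q.darts.length := List.length_pos_iff.mpr hl
    have hchain := List.isChain_iff_getElem.mp q.darts_chain
    have hhead : G.vtx (q.darts.get ⟨0, hn⟩) = w := by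
      apply q.darts_head
      rw [List.head?_eq_head hl]
      simp [List.head_eq_getElem]
    have hlast : G.vtx (G.inv (q.darts.get ⟨q.darts.length - 1, by omega⟩)) = w := by
      apply q.darts_last
      rw [List.getLast?_eq_getLast hl]
      simp [List.getLast_eq_getElem]
    have hcond : ∀ i : Fin q.darts.length, G.vtx (G.inv (q.darts.get i))
        = G.vtx (q.darts.get ⟨(i.1 + 1) % q.darts.length, Nat.mod_lt _ hn⟩) := by
      intro i
      by_cases h : i.1 + 1 < q.darts.length
      · have heq : (⟨(i.1 + 1) % q.darts.length, Nat.mod_lt _ hn⟩ : Fin q.darts.length)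
            = ⟨i.1 + 1, h⟩ := Fin.ext (Nat.mod_eq_of_lt h)
        rw [heq]
        have := hchain i.1 (by omega)
        simpa using this
      · have hi : i.1 = q.darts.length - 1 := by omega
        have heq : (⟨(i.1 + 1) % q.darts.length, Nat.mod_lt _ hn⟩ : Fin q.darts.length)
            = ⟨0, hn⟩ := Fin.ext (by
              have : i.1 + 1 = q.darts.length := by omega
              simp [this])
        rw [heq]
        have heq2 : i = ⟨q.darts.length - 1, by omega⟩ := Fin.ext hi
        rw [heq2, hlast, hhead]
    have hsum : q.wsum ν = ∑ i : Fin q.darts.length, ν (q.darts.get i) :=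
      list_sum_fin _ _
    rw [hsum]
    exact closedwalk_sum_mem ν _ hn _ hcond

lemma walk_nonempty {X : Multigraph} (hconn : X.Connected) (u v : X.V) :
    Nonempty (Walk X u v) := by
  have h := hconn u v
  induction h with
  | refl => exact ⟨.nil u⟩
  | tail hab hbc ih =>
      obtain ⟨x, -, hx1, hx2⟩ := hbc
      obtain ⟨p⟩ := ih
      exact ⟨p.append (.cons x hx1 hx2 (.nil _))⟩

/-- The action of an automorphism on vertices. -/
noncomputable def vmap (X : Multigraph) (g : X.autGroup) : X.V → X.V :=
  fun u => X.vtx ((g : Equiv.Perm X.D) ((X.vtx_surj u).choose))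

lemma vmap_vtx (X : Multigraph) (g : X.autGroup) (x : X.D) :
    X.vmap g (X.vtx x) = X.vtx ((g : Equiv.Perm X.D) x) := by
  have hx := (X.vtx_surj (X.vtx x)).choose_spec
  exact (g.2.2 _ x).mp hx

lemma vmap_mul (X : Multigraph) (g h : X.autGroup) (u : X.V) :
    X.vmap (g * h) u = X.vmap g (X.vmap h u) := by
  obtain ⟨x, rfl⟩ := X.vtx_surj u
  rw [vmap_vtx, vmap_vtx, vmap_vtx]
  simp

lemma vmap_one (X : Multigraph) (u : X.V) : X.vmap 1 u = u := by
  obtain ⟨x, rfl⟩ := X.vtx_surj u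
  rw [vmap_vtx]
  simp

end Multigraph
end Bridge

open Multigraph

/-- Let `ξ` be a harmonic `A`-flow on a connected graph `X` and let `f` be a
`ξ`-invariant automorphism acting semiregularly on darts and on vertices. Then
the induced flow `ξ̄` on the quotient graph `Y = X/⟨f⟩` (given by
`ξ̄([x]) = ξ(x)`) satisfies the vertex Kirchhoff law, and the local group
`A^ξ̄` — the subgroup of `A` generated by the sums of `ξ̄` along oriented
cycles of `Y` — is an epimorphic image of the cyclic group `⟨f⟩`. -/
theorem quotient_flow_klv_and_local_group (X : Multigraph) (hconn : X.Connected)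
    (A : Type) [AddCommGroup A] (ξ : X.D → A) (hξ : X.IsHarmonicFlow ξ)
    (f : X.autGroup)
    (hinv : ∀ x : X.D, ξ ((f : Equiv.Perm X.D) x) = ξ x)
    (hsemiD : ∀ g ∈ Subgroup.zpowers f,
      (∃ x : X.D, (g : Equiv.Perm X.D) x = x) → g = 1)
    (hsemiV : ∀ g ∈ Subgroup.zpowers f,
      (∃ x : X.D, X.vtx ((g : Equiv.Perm X.D) x) = X.vtx x) → g = 1)
    (ξ' : (X.quotientGraph f).D → A)
    (hξ' : ∀ x : X.D, ξ' (Quotient.mk (X.dartOrbitSetoid f) x) = ξ x) :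
    (∀ v : (X.quotientGraph f).V,
      ∑ d ∈ (X.quotientGraph f).dartsAt v, ξ' d = 0) ∧
    ∃ φ : Subgroup.zpowers f →*
        Multiplicative (AddSubgroup.closure
          {a : A | ∃ (n : ℕ) (hn : 0 < n) (c : Fin n → (X.quotientGraph f).D),
            (X.quotientGraph f).IsCycleVec hn c ∧ a = ∑ i, ξ' (c i)}),
      Function.Surjective φ := by
  classical
  have hYvtx : ∀ x : X.D, (X.quotientGraph f).vtx (Quotient.mk (X.dartOrbitSetoid f) x)
      = Quotient.mk (X.vtxOrbitSetoid f) (X.vtx x) := fun x => rfl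
  have hYinv : ∀ x : X.D, (X.quotientGraph f).inv (Quotient.mk (X.dartOrbitSetoid f) x)
      = Quotient.mk (X.dartOrbitSetoid f) (X.inv x) := fun x => rfl
  have hcoe : ∀ k : ℤ, ((f ^ k : X.autGroup) : Equiv.Perm X.D)
      = (f : Equiv.Perm X.D) ^ k := fun k => SubgroupClass.coe_zpow f k
  -- ξ is invariant under all powers of f
  have hN : ∀ (k : ℕ) (x : X.D), ξ (((f : Equiv.Perm X.D) ^ k) x) = ξ x := by
    intro k
    induction k with
    | zero => intro x; simp
    | succ k ih =>
        intro x
        rw [pow_succ, Equiv.Perm.mul_apply, ih, hinv]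
  have hinvz : ∀ g : X.autGroup, g ∈ Subgroup.zpowers f →
      ∀ x, ξ ((g : Equiv.Perm X.D) x) = ξ x := by
    intro g hg
    obtain ⟨k, rfl⟩ := Subgroup.mem_zpowers_iff.mp hg
    intro x
    rw [hcoe]
    cases k with
    | ofNat m => simpa [zpow_natCast] using hN m x
    | negSucc m =>
        have h1 := hN (m + 1) (((f : Equiv.Perm X.D) ^ (m + 1))⁻¹ x)
        simp only [Equiv.Perm.coe_inv, Equiv.apply_symm_apply] at h1
        rw [zpow_negSucc]
        exact h1.symm
  -- Part 1: Kirchhoff vertex law in the quotient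
  have hmemX : ∀ (v : X.V) (x : X.D), x ∈ X.dartsAt v ↔ X.vtx x = v := by
    intro v x; simp [Multigraph.dartsAt]
  have hmemY : ∀ (v : (X.quotientGraph f).V) (d : (X.quotientGraph f).D), d ∈ (X.quotientGraph f).dartsAt v ↔ (X.quotientGraph f).vtx d = v := by
    intro v d; simp [Multigraph.dartsAt]
  have part1 : ∀ v : (X.quotientGraph f).V, ∑ d ∈ (X.quotientGraph f).dartsAt v, ξ' d = 0 := by
    intro v'
    obtain ⟨v, rfl⟩ := Quotient.exists_rep v'
    have hbij : ∑ x ∈ X.dartsAt v, ξ x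
        = ∑ d ∈ (X.quotientGraph f).dartsAt (Quotient.mk (X.vtxOrbitSetoid f) v), ξ' d := by
      apply Finset.sum_bij (i := fun (x : X.D) _ => Quotient.mk (X.dartOrbitSetoid f) x)
      · intro x hx
        refine (hmemY _ _).mpr ?_
        rw [hYvtx]
        exact congrArg _ ((hmemX v x).mp hx)
      · intro x hx y hy h
        have h2 : ∃ k : ℤ, ((f : Equiv.Perm X.D) ^ k) x = y := Quotient.exact h
        obtain ⟨k, hk⟩ := h2
        have hg : (f ^ k : X.autGroup) = 1 := by
          apply hsemiV _ (Subgroup.zpow_mem_zpowers f k)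
          refine ⟨x, ?_⟩
          rw [hcoe, hk, (hmemX v y).mp hy, (hmemX v x).mp hx]
        have hpk : ((f : Equiv.Perm X.D) ^ k) = 1 := by
          rw [← hcoe, hg]; rfl
        rw [← hk, hpk, Equiv.Perm.one_apply]
      · intro d hd
        obtain ⟨z, rfl⟩ := Quotient.exists_rep d
        replace hd := (hmemY _ _).mp hd
        rw [hYvtx] at hd
        have h2 : ∃ (k : ℤ) (t : X.D), X.vtx t = X.vtx z
            ∧ X.vtx (((f : Equiv.Perm X.D) ^ k) t) = v := Quotient.exact hd
        obtain ⟨k, t, ht1, ht2⟩ := h2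
        refine ⟨((f : Equiv.Perm X.D) ^ k) z, ?_, ?_⟩
        · rw [hmemX]
          have h3 := ((f ^ k : X.autGroup).2.2 t z).mp ht1
          rw [hcoe] at h3
          rw [← h3]
          exact ht2
        · have hzz : Quotient.mk (X.dartOrbitSetoid f) z
              = Quotient.mk (X.dartOrbitSetoid f) (((f : Equiv.Perm X.D) ^ k) z) := by
            apply Quotient.sound
            exact ⟨k, rfl⟩
          exact hzz.symm
      · intro x _
        exact (hξ' x).symm
    rw [← hbij]
    exact hξ.klv v
  refine ⟨part1, ?_⟩
  -- Part 2
  obtain ⟨u0⟩ : Nonempty X.V := ⟨X.vtx (Classical.arbitrary X.D)⟩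
  set cw : ∀ v : X.V, Walk X u0 v :=
    fun v => Classical.choice (walk_nonempty hconn u0 v) with hcwdef
  set θ : X.V → A := fun v => (cw v).wsum ξ with hθdef
  have hzero : ∀ (w : X.V) (q : Walk X w w), q.wsum ξ = 0 := by
    intro w q
    have hmem := Multigraph.closed_wsum_mem ξ q
    have hle : AddSubgroup.closure (X.cycSums ξ) ≤ ⊥ := by
      rw [AddSubgroup.closure_le]
      rintro a ⟨n, hn, c, hcyc, rfl⟩
      simp only [AddSubgroup.coe_bot, Set.mem_singleton_iff]
      exact hξ.klc hn c hcyc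
    exact AddSubgroup.mem_bot.mp (hle hmem)
  have key : ∀ (u v : X.V) (p : Walk X u v), p.wsum ξ = θ v - θ u := by
    intro u v p
    have hq := hzero u0 ((cw u).append (p.append (cw v).reverse))
    rw [Walk.wsum_append, Walk.wsum_append, Walk.wsum_reverse ξ hξ.antisym] at hq
    simp only [hθdef]
    have h4 : p.wsum ξ + (cw u).wsum ξ - (cw v).wsum ξ = 0 := by
      rw [← hq]; abel
    exact eq_sub_of_add_eq (sub_eq_zero.mp h4)
  -- automorphism action on walks
  have auts : ∀ (g : X.autGroup) (x : X.D),
      X.vtx ((g : Equiv.Perm X.D) x) = X.vmap g (X.vtx x) :=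
    fun g x => (X.vmap_vtx g x).symm
  have auti : ∀ (g : X.autGroup) (x : X.D),
      X.vtx (X.inv ((g : Equiv.Perm X.D) x)) = X.vmap g (X.vtx (X.inv x)) := by
    intro g x
    rw [← g.2.1 x]
    exact (X.vmap_vtx g (X.inv x)).symm
  have transl : ∀ (g : X.autGroup), g ∈ Subgroup.zpowers f → ∀ w : X.V,
      θ (X.vmap g w) - θ w = θ (X.vmap g u0) - θ u0 := by
    intro g hg w
    have h1 := key u0 w (cw w)
    have h2 := key _ _ ((cw w).mapHom (G' := X) (fun x => (g : Equiv.Perm X.D) x) (X.vmap g)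
      (auts g) (auti g))
    have h3 : ((cw w).mapHom (G' := X) (fun x => (g : Equiv.Perm X.D) x) (X.vmap g)
        (auts g) (auti g)).wsum ξ = (cw w).wsum ξ :=
      Walk.wsum_mapHom _ _ _ _ ξ ξ (hinvz g hg) (cw w)
    have h4 : θ (X.vmap g w) - θ (X.vmap g u0) = θ w - θ u0 := by
      rw [← h2, h3, h1]
    exact sub_eq_sub_iff_sub_eq_sub.mp h4
  set Φ : X.autGroup → A := fun g => θ (X.vmap g u0) - θ u0 with hΦdef
  have Φ_one : Φ 1 = 0 := by
    simp only [hΦdef]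
    rw [X.vmap_one]
    exact sub_self _
  have Φ_mul : ∀ g h : X.autGroup, g ∈ Subgroup.zpowers f →
      Φ (g * h) = Φ g + Φ h := by
    intro g h hg
    simp only [hΦdef]
    rw [X.vmap_mul]
    have ht := transl g hg (X.vmap h u0)
    rw [← ht]
    abel
  have Φ_inv : ∀ g : X.autGroup, g ∈ Subgroup.zpowers f → Φ g⁻¹ = - Φ g := by
    intro g hg
    have h := Φ_mul g g⁻¹ hg
    rw [mul_inv_cancel, Φ_one] at h
    exact (neg_eq_of_add_eq_zero_right h.symm).symm
  -- classes of orbit-related vertices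
  have hVrel : ∀ (g : X.autGroup), g ∈ Subgroup.zpowers f → ∀ w : X.V,
      Quotient.mk (X.vtxOrbitSetoid f) (X.vmap g w)
        = Quotient.mk (X.vtxOrbitSetoid f) w := by
    intro g hg w
    obtain ⟨k, rfl⟩ := Subgroup.mem_zpowers_iff.mp hg
    obtain ⟨x, rfl⟩ := X.vtx_surj w
    apply Quotient.sound
    refine ⟨-k, ((f : Equiv.Perm X.D) ^ k) x, ?_, ?_⟩
    · rw [X.vmap_vtx, hcoe]
    · rw [← Equiv.Perm.mul_apply, ← zpow_add, neg_add_cancel, zpow_zero,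
        Equiv.Perm.one_apply]
  have claim1 : ∀ (g : X.autGroup), g ∈ Subgroup.zpowers f →
      Φ g ∈ AddSubgroup.closure ((X.quotientGraph f).cycSums ξ') := by
    intro g hg
    have hE : (Quotient.mk (X.vtxOrbitSetoid f) (X.vmap g u0) : (X.quotientGraph f).V)
        = Quotient.mk (X.vtxOrbitSetoid f) u0 := hVrel g hg u0
    have hmem := Multigraph.closed_wsum_mem ξ'
      (((cw (X.vmap g u0)).mapHom (G' := X.quotientGraph f) (Quotient.mk (X.dartOrbitSetoid f))
        (Quotient.mk (X.vtxOrbitSetoid f)) hYvtx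
        (fun x => by rw [hYinv, hYvtx])).copy rfl hE)
    erw [Walk.wsum_copy] at hmem
    erw [Walk.wsum_mapHom _ _ _ _ ξ ξ' hξ'] at hmem
    rw [key u0 (X.vmap g u0) (cw _)] at hmem
    exact hmem
  -- lifting darts of the quotient
  have lift_dart : ∀ (d : (X.quotientGraph f).D) (w : X.V),
      (X.quotientGraph f).vtx d = Quotient.mk (X.vtxOrbitSetoid f) w →
      ∃ y : X.D, Quotient.mk (X.dartOrbitSetoid f) y = d ∧ X.vtx y = w := by
    intro d w h
    obtain ⟨z, rfl⟩ := Quotient.exists_rep d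
    rw [hYvtx] at h
    have h2 : ∃ (k : ℤ) (t : X.D), X.vtx t = X.vtx z
        ∧ X.vtx (((f : Equiv.Perm X.D) ^ k) t) = w := Quotient.exact h
    obtain ⟨k, t, ht1, ht2⟩ := h2
    have hzz : Quotient.mk (X.dartOrbitSetoid f) z
        = Quotient.mk (X.dartOrbitSetoid f) (((f : Equiv.Perm X.D) ^ k) z) := by
      apply Quotient.sound
      exact ⟨k, rfl⟩
    refine ⟨((f : Equiv.Perm X.D) ^ k) z, hzz.symm, ?_⟩
    have h3 := ((f ^ k : X.autGroup).2.2 t z).mp ht1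
    rw [hcoe] at h3
    rw [← h3]
    exact ht2
  -- the subgroup of values of Φ
  set R : AddSubgroup A := {
    carrier := {a | ∃ g ∈ Subgroup.zpowers f, Φ g = a}
    zero_mem' := ⟨1, one_mem _, Φ_one⟩
    add_mem' := by
      rintro a b ⟨g, hg, rfl⟩ ⟨h, hh, rfl⟩
      exact ⟨g * h, mul_mem hg hh, Φ_mul g h hg⟩
    neg_mem' := by
      rintro a ⟨g, hg, rfl⟩
      exact ⟨g⁻¹, inv_mem hg, Φ_inv g hg⟩ } with hRdef
  have claim2 : AddSubgroup.closure ((X.quotientGraph f).cycSums ξ') ≤ R := by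
    rw [AddSubgroup.closure_le]
    rintro a ⟨n, hn, c, hcycvec, rfl⟩
    have hcyc := hcycvec.1
    haveI : NeZero n := ⟨hn.ne'⟩
    -- step lifting
    have hstep : ∀ (x : X.D) (i : Fin n),
        Quotient.mk (X.dartOrbitSetoid f) x = c i →
        ∃ y, Quotient.mk (X.dartOrbitSetoid f) y = c (i + 1)
          ∧ X.vtx y = X.vtx (X.inv x) := by
      intro x i hx
      apply lift_dart
      have h1 := hcyc i
      rw [fin_mk_mod_succ] at h1
      rw [← h1, ← hx, hYinv, hYvtx]
    -- lift the whole cycle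
    have hlift : ∀ m : ℕ, m < n → ∃ x : Fin n → X.D,
        (∀ i : Fin n, i.1 ≤ m → Quotient.mk (X.dartOrbitSetoid f) (x i) = c i) ∧
        (∀ (i : ℕ) (h2 : i + 1 < n), i + 1 ≤ m →
          X.vtx (x ⟨i + 1, h2⟩) = X.vtx (X.inv (x ⟨i, by omega⟩))) := by
      intro m
      induction m with
      | zero =>
          intro _
          refine ⟨fun i => (Quotient.exists_rep (c i)).choose,
            fun i _ => (Quotient.exists_rep (c i)).choose_spec, ?_⟩
          intro i h2 h3
          omega
      | succ m ih =>
          intro hm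
          obtain ⟨x, hx1, hx2⟩ := ih (by omega)
          obtain ⟨y, hy1, hy2⟩ := hstep (x ⟨m, by omega⟩) ⟨m, by omega⟩
            (hx1 ⟨m, by omega⟩ (by simp))
          have hfin : ((⟨m, by omega⟩ : Fin n) + 1) = (⟨m + 1, hm⟩ : Fin n) := by
            apply Fin.ext
            rw [finval_add_one]
            exact Nat.mod_eq_of_lt hm
          rw [hfin] at hy1
          refine ⟨Function.update x ⟨m + 1, hm⟩ y, ?_, ?_⟩
          · intro i hi
            by_cases hieq : i = (⟨m + 1, hm⟩ : Fin n)
            · subst hieq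
              rw [Function.update_self]
              exact hy1
            · rw [Function.update_of_ne hieq]
              apply hx1
              have : i.1 ≠ m + 1 := fun h => hieq (Fin.ext h)
              omega
          · intro i h2 h3
            by_cases hieq : i + 1 = m + 1
            · have hi : i = m := by omega
              rw [show (⟨i + 1, h2⟩ : Fin n) = ⟨m + 1, hm⟩ from Fin.ext hieq]
              rw [Function.update_self]
              rw [Function.update_of_ne (by
                intro hh
                have h9 : i = m + 1 := congrArg Fin.val hh
                omega)]
              rw [hy2]
              exact congrArg (fun s : Fin n => X.vtx (X.inv (x s)))
                (Fin.ext (show (m : ℕ) = i from hi.symm))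
            · rw [Function.update_of_ne (by
                  intro hh
                  have h9 : i + 1 = m + 1 := congrArg Fin.val hh
                  omega),
                Function.update_of_ne (by
                  intro hh
                  have h9 : i = m + 1 := congrArg Fin.val hh
                  omega)]
              exact hx2 i h2 (by omega)
    obtain ⟨x, hx1, hx2⟩ := hlift (n - 1) (by omega)
    have hx1' : ∀ i : Fin n, Quotient.mk (X.dartOrbitSetoid f) (x i) = c i :=
      fun i => hx1 i (by omega)
    have hx2' : ∀ (i : ℕ) (h2 : i + 1 < n),
        X.vtx (x ⟨i + 1, h2⟩) = X.vtx (X.inv (x ⟨i, by omega⟩)) :=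
      fun i h2 => hx2 i h2 (by omega)
    -- build the lifted walk
    have hwalk : ∀ (m : ℕ) (hm : m < n),
        ∃ p : Walk X (X.vtx (x ⟨0, hn⟩)) (X.vtx (X.inv (x ⟨m, hm⟩))),
          p.wsum ξ = ∑ i : Fin (m + 1), ξ (x ⟨i.1, by omega⟩) := by
      intro m
      induction m with
      | zero =>
          intro hm
          refine ⟨.cons (x ⟨0, hn⟩) rfl rfl (.nil _), ?_⟩
          rw [Walk.wsum_cons, Walk.wsum_nil, add_zero]
          simp
      | succ m ih =>
          intro hm
          obtain ⟨p, hp⟩ := ih (by omega)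
          refine ⟨p.append (.cons (x ⟨m + 1, hm⟩) (hx2' m hm) rfl (.nil _)), ?_⟩
          rw [Walk.wsum_append, hp, Walk.wsum_cons, Walk.wsum_nil, add_zero]
          conv_rhs => rw [Fin.sum_univ_castSucc]
          rfl
    obtain ⟨p, hp⟩ := hwalk (n - 1) (by omega)
    have hsumc : p.wsum ξ = ∑ i, ξ' (c i) := by
      rw [hp]
      have he : n - 1 + 1 = n := by omega
      rw [← Equiv.sum_comp (finCongr he) (fun i : Fin n => ξ' (c i))]
      apply Finset.sum_congr rfl
      intro i _
      rw [← hx1' (finCongr he i), hξ']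
      congr 1
    -- identify the endpoints
    have hE2 : Quotient.mk (X.vtxOrbitSetoid f) (X.vtx (X.inv (x ⟨n - 1, by omega⟩)))
        = Quotient.mk (X.vtxOrbitSetoid f) (X.vtx (x ⟨0, hn⟩)) := by
      have h1 := hcyc ⟨n - 1, by omega⟩
      rw [fin_mk_mod_succ] at h1
      have h2 : ((⟨n - 1, by omega⟩ : Fin n) + 1) = (⟨0, hn⟩ : Fin n) := by
        apply Fin.ext
        rw [finval_add_one]
        show (n - 1 + 1) % n = 0
        rw [Nat.sub_add_cancel hn, Nat.mod_self]
      rw [h2] at h1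
      rw [← hx1' ⟨n - 1, by omega⟩, ← hx1' ⟨0, hn⟩, hYinv, hYvtx, hYvtx] at h1
      exact h1
    have h2 : ∃ (k : ℤ) (t : X.D), X.vtx t = X.vtx (X.inv (x ⟨n - 1, by omega⟩))
        ∧ X.vtx (((f : Equiv.Perm X.D) ^ k) t) = X.vtx (x ⟨0, hn⟩) :=
      Quotient.exact hE2
    obtain ⟨k, t, ht1, ht2⟩ := h2
    have h3 : X.vmap (f ^ k) (X.vtx (X.inv (x ⟨n - 1, by omega⟩)))
        = X.vtx (x ⟨0, hn⟩) := by
      rw [← ht1, X.vmap_vtx, hcoe]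
      have h4 := ((f ^ k : X.autGroup).2.2 t t).mp rfl
      exact ht2
    -- compute Φ (f ^ k)
    have h5 := transl (f ^ k) (Subgroup.zpow_mem_zpowers f k)
      (X.vtx (X.inv (x ⟨n - 1, by omega⟩)))
    rw [h3] at h5
    have h6 := key _ _ p
    -- h6 : p.wsum ξ = θ (vtx (inv (x ⟨n-1⟩))) - θ (vtx (x ⟨0⟩))
    have h7 : Φ (f ^ k) = - ∑ i, ξ' (c i) := by
      simp only [hΦdef]
      rw [← h5, ← hsumc, h6]
      abel
    refine ⟨(f ^ k)⁻¹, inv_mem (Subgroup.zpow_mem_zpowers f k), ?_⟩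
    rw [Φ_inv _ (Subgroup.zpow_mem_zpowers f k), h7, neg_neg]
  -- assemble the epimorphism
  refine ⟨MonoidHom.mk' (fun g => Multiplicative.ofAdd
    (⟨Φ ↑g, claim1 ↑g g.2⟩ : AddSubgroup.closure ((X.quotientGraph f).cycSums ξ'))) ?_, ?_⟩
  · intro a b
    erw [← ofAdd_add]
    exact congrArg Multiplicative.ofAdd (Subtype.ext (Φ_mul ↑a ↑b a.2))
  · intro b
    obtain ⟨g, hg, hΦg⟩ := claim2 (Multiplicative.toAdd b).2
    refine ⟨⟨g, hg⟩, ?_⟩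
    have hval : (⟨Φ g, claim1 g hg⟩ : AddSubgroup.closure ((X.quotientGraph f).cycSums ξ'))
        = Multiplicative.toAdd b := Subtype.ext hΦg
    show Multiplicative.ofAdd _ = b
    rw [hval]
    rfl
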